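/- arXiv:2503.04566 — 2 statements merged into one kernel-verified Lean document; each statement's English description precedes it below -/
import Mathlib

section
/- Let ρ be any 2^n × 2^n complex matrix, let U = U_1 ⊗ U_2 ⊗ ⋯ ⊗ U_n be a Kronecker product of 2×2 unitary matrices U_i, and let R ⊆ {1, ..., n} be any subset. Then Σ_{P ∈ P_n^+ : supp(P) = R} |Tr(P ρ)|² = Σ_{P ∈ P_n^+ : supp(P) = R} |Tr(P U ρ U†)|². -/
open Matrix

/-- The single-qubit Pauli matrices I, X, Y, Z. -/
noncomputable def pauli : Fin 4 → Matrix (Fin 2) (Fin 2) ℂ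
  | 0 => 1
  | 1 => !![0, 1; 1, 0]
  | 2 => !![0, -Complex.I; Complex.I, 0]
  | 3 => !![1, 0; 0, -1]

/-- The n-qubit Pauli string (with phase +1). -/
noncomputable def pauliString {n : ℕ} (s : Fin n → Fin 4) :
    Matrix (Fin n → Fin 2) (Fin n → Fin 2) ℂ :=
  fun x y => ∏ i, pauli (s i) (x i) (y i)

/-- The Kronecker product U_1 ⊗ ⋯ ⊗ U_n of single-qubit matrices. -/
noncomputable def tensorFold {n : ℕ} (U : Fin n → Matrix (Fin 2) (Fin 2) ℂ) :
    Matrix (Fin n → Fin 2) (Fin n → Fin 2) ℂ :=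
  fun x y => ∏ i, U i (x i) (y i)

/-! For Pauli strings `P` ranging over a product set, `∑ Tr(P ρ) Tr(P σ)` depends on `ρ, σ` only
through the kernel `∑ P_ab P_cd`, which factorises over the qubits. With the blocks `{I}` and
`{X, Y, Z}` each factor is the kernel of the single-qubit twirl `E ↦ ∑ P_t E P_t`, which is `E`
resp. `2 Tr(E) • 1 - E`; both commute with conjugation by a unitary, so the kernel is unchanged when
each `P_t` is replaced by `V† P_t V`. Taking `σ = ρᴴ` (Pauli strings are Hermitian) turns the
bilinear sum into `∑ |Tr(P ρ)|²`.
-/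

lemma sum_trace_mul_trace_congr {ι m R : Type*} [Fintype m] [CommSemiring R] {F : Finset ι}
    {G H : ι → Matrix m m R}
    (h : ∀ a b c d, ∑ s ∈ F, G s a b * G s c d = ∑ s ∈ F, H s a b * H s c d)
    (ρ σ : Matrix m m R) :
    ∑ s ∈ F, (G s * ρ).trace * (G s * σ).trace = ∑ s ∈ F, (H s * ρ).trace * (H s * σ).trace := by
  have expand : ∀ K : ι → Matrix m m R, ∑ s ∈ F, (K s * ρ).trace * (K s * σ).trace =
      ∑ c, ∑ d, ∑ a, ∑ b, (∑ s ∈ F, K s a b * K s c d) * (ρ b a * σ d c) := by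
    intro K
    simp only [trace, diag, Matrix.mul_apply, Finset.sum_mul, Finset.mul_sum]
    simp_rw [Finset.sum_comm (s := F)]
    simp only [mul_comm, mul_left_comm]
  simp only [expand, h]

lemma pauli_conjTranspose (t : Fin 4) : (pauli t)ᴴ = pauli t := by
  fin_cases t <;> ext a b <;> fin_cases a <;> fin_cases b <;> simp [pauli]

lemma sum_nonidentity_pauli_mul_mul_pauli (E : Matrix (Fin 2) (Fin 2) ℂ) :
    ∑ t ∈ ({1, 2, 3} : Finset (Fin 4)), pauli t * E * pauli t = (2 * E.trace) • 1 - E := by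
  rw [Finset.sum_insert (by decide), Finset.sum_insert (by decide), Finset.sum_singleton]
  ext a b
  fin_cases a <;> fin_cases b <;>
    simp only [Matrix.add_apply, Matrix.sub_apply, Matrix.smul_apply, pauli, Matrix.mul_apply,
      Fin.sum_univ_two, trace, diag, Fin.zero_eta, Fin.mk_one, Fin.isValue, of_apply, cons_val',
      cons_val_zero, cons_val_one, cons_val_fin_one, one_apply_eq, ne_eq, zero_ne_one,
      one_ne_zero, not_false_eq_true, one_apply_ne, smul_eq_mul] <;>
    ring_nf <;> simp only [Complex.I_sq] <;> ring

lemma sum_pauli_mul_mul_pauli_unitary_conj {V : Matrix (Fin 2) (Fin 2) ℂ}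
    (hV : V ∈ unitaryGroup (Fin 2) ℂ) {B : Finset (Fin 4)} (hB : B = {0} ∨ B = {1, 2, 3})
    (E : Matrix (Fin 2) (Fin 2) ℂ) :
    ∑ t ∈ B, pauli t * (V * E * Vᴴ) * pauli t = V * (∑ t ∈ B, pauli t * E * pauli t) * Vᴴ := by
  have hVV : Vᴴ * V = 1 := mem_unitaryGroup_iff'.mp hV
  have hVV' : V * Vᴴ = 1 := mem_unitaryGroup_iff.mp hV
  rcases hB with rfl | rfl
  · simp [pauli]
  · rw [sum_nonidentity_pauli_mul_mul_pauli, sum_nonidentity_pauli_mul_mul_pauli,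
      trace_mul_cycle, hVV, Matrix.one_mul]
    simp [Matrix.mul_sub, Matrix.sub_mul, hVV']

lemma mul_single_one_mul_apply {m R : Type*} [Fintype m] [DecidableEq m] [Semiring R]
    (M N : Matrix m m R) (a b c d : m) :
    (M * Matrix.single b c (1 : R) * N) a d = M a b * N c d := by
  simp [Matrix.mul_apply, Matrix.single_apply, ite_and]

lemma sum_conj_pauli_apply_mul_apply {V : Matrix (Fin 2) (Fin 2) ℂ}
    (hV : V ∈ unitaryGroup (Fin 2) ℂ) {B : Finset (Fin 4)} (hB : B = {0} ∨ B = {1, 2, 3})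
    (a b c d : Fin 2) :
    ∑ t ∈ B, (Vᴴ * pauli t * V) a b * (Vᴴ * pauli t * V) c d
      = ∑ t ∈ B, pauli t a b * pauli t c d := by
  have hVV : Vᴴ * V = 1 := mem_unitaryGroup_iff'.mp hV
  -- the kernel is the `(a, d)` entry of the twirl of the matrix unit `E`
  set E : Matrix (Fin 2) (Fin 2) ℂ := Matrix.single b c 1
  have twirl : ∑ t ∈ B, Vᴴ * pauli t * V * E * (Vᴴ * pauli t * V)
      = ∑ t ∈ B, pauli t * E * pauli t := calc
    _ = Vᴴ * (∑ t ∈ B, pauli t * (V * E * Vᴴ) * pauli t) * V := by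
      simp only [Finset.mul_sum, Finset.sum_mul, Matrix.mul_assoc]
    _ = _ := by
      rw [sum_pauli_mul_mul_pauli_unitary_conj hV hB]
      simp only [← Matrix.mul_assoc, hVV, Matrix.one_mul]
      simp only [Matrix.mul_assoc, hVV, Matrix.mul_one]
  simpa [Matrix.sum_apply, E, mul_single_one_mul_apply] using congr_fun (congr_fun twirl a) d

section PauliSums

variable {n : ℕ}

lemma tensorFold_mul (A B : Fin n → Matrix (Fin 2) (Fin 2) ℂ) :
    tensorFold A * tensorFold B = tensorFold fun i => A i * B i := by
  ext x y
  simp only [tensorFold, Matrix.mul_apply, ← Finset.prod_mul_distrib]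
  exact (Fintype.prod_sum fun i t => A i (x i) t * B i t (y i)).symm

lemma conjTranspose_tensorFold (A : Fin n → Matrix (Fin 2) (Fin 2) ℂ) :
    (tensorFold A)ᴴ = tensorFold fun i => (A i)ᴴ := by
  ext x y
  exact map_prod (starRingEnd ℂ) (fun i => A i (y i) (x i)) Finset.univ

lemma pauliString_eq_tensorFold (s : Fin n → Fin 4) :
    pauliString s = tensorFold fun i => pauli (s i) := rfl

lemma pauliString_conjTranspose (s : Fin n → Fin 4) : (pauliString s)ᴴ = pauliString s := by
  simp only [pauliString_eq_tensorFold, conjTranspose_tensorFold, pauli_conjTranspose]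

lemma conjTranspose_tensorFold_mul_pauliString_mul_tensorFold
    (U : Fin n → Matrix (Fin 2) (Fin 2) ℂ) (s : Fin n → Fin 4) :
    (tensorFold U)ᴴ * pauliString s * tensorFold U
      = tensorFold fun i => (U i)ᴴ * pauli (s i) * U i := by
  rw [pauliString_eq_tensorFold, conjTranspose_tensorFold, tensorFold_mul, tensorFold_mul]

lemma sum_piFinset_tensorFold_apply_mul_apply {ι : Type*} [DecidableEq ι]
    (G : Fin n → ι → Matrix (Fin 2) (Fin 2) ℂ) (A : Fin n → Finset ι) (a b c d : Fin n → Fin 2) :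
    ∑ s ∈ Fintype.piFinset A,
        tensorFold (fun i => G i (s i)) a b * tensorFold (fun i => G i (s i)) c d
      = ∏ i, ∑ t ∈ A i, G i t (a i) (b i) * G i t (c i) (d i) := by
  simp only [tensorFold, ← Finset.prod_mul_distrib]
  exact (Finset.prod_univ_sum A fun i t => G i t (a i) (b i) * G i t (c i) (d i)).symm

lemma sum_trace_pauliString_mul_unitary_conj {U : Fin n → Matrix (Fin 2) (Fin 2) ℂ}
    (hU : ∀ i, U i ∈ unitaryGroup (Fin 2) ℂ) {A : Fin n → Finset (Fin 4)}
    (hA : ∀ i, A i = {0} ∨ A i = {1, 2, 3}) (ρ σ : Matrix (Fin n → Fin 2) (Fin n → Fin 2) ℂ) :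
    ∑ s ∈ Fintype.piFinset A, (pauliString s * (tensorFold U * ρ * (tensorFold U)ᴴ)).trace
        * (pauliString s * (tensorFold U * σ * (tensorFold U)ᴴ)).trace
      = ∑ s ∈ Fintype.piFinset A, (pauliString s * ρ).trace * (pauliString s * σ).trace := by
  have cycle : ∀ s τ, (pauliString s * (tensorFold U * τ * (tensorFold U)ᴴ)).trace
      = ((tensorFold U)ᴴ * pauliString s * tensorFold U * τ).trace := by
    intro s τ
    rw [trace_mul_cycle']
    simp only [Matrix.mul_assoc]
  simp only [cycle, conjTranspose_tensorFold_mul_pauliString_mul_tensorFold]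
  refine sum_trace_mul_trace_congr (fun a b c d => ?_) ρ σ
  rw [sum_piFinset_tensorFold_apply_mul_apply (fun i t => (U i)ᴴ * pauli t * U i)]
  exact (Finset.prod_congr rfl fun i _ =>
      sum_conj_pauli_apply_mul_apply (hU i) (hA i) _ _ _ _).trans
    (sum_piFinset_tensorFold_apply_mul_apply (fun _ => pauli) A a b c d).symm

lemma sq_norm_trace_pauliString_mul (s : Fin n → Fin 4)
    (ρ : Matrix (Fin n → Fin 2) (Fin n → Fin 2) ℂ) :
    (‖(pauliString s * ρ).trace‖ : ℂ) ^ 2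
      = (pauliString s * ρ).trace * (pauliString s * ρᴴ).trace := by
  rw [← Complex.mul_conj', ← Complex.star_def, ← trace_conjTranspose, conjTranspose_mul,
    pauliString_conjTranspose, trace_mul_comm ρᴴ]

lemma filter_support_eq_piFinset (R : Finset (Fin n)) :
    Finset.univ.filter (fun s : Fin n → Fin 4 => ∀ i, s i ≠ 0 ↔ i ∈ R)
      = Fintype.piFinset fun i => if i ∈ R then {1, 2, 3} else {0} := by
  ext s
  simp only [Finset.mem_filter, Finset.mem_univ, true_and, Fintype.mem_piFinset]
  refine forall_congr' fun i => ?_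
  split_ifs with hi <;> simp only [hi, iff_true, iff_false] <;>
    generalize s i = t <;> revert t <;> decide

end PauliSums

/-- For any 2^n × 2^n matrix ρ, any tensor product U = U_1 ⊗ ⋯ ⊗ U_n of
single-qubit unitaries, and any subset R ⊆ {1,...,n},
Σ_{P ∈ P_n^+ : supp(P) = R} |Tr(Pρ)|² = Σ_{P ∈ P_n^+ : supp(P) = R} |Tr(P U ρ U†)|². -/
theorem pauli_support_invariance {n : ℕ}
    (ρ : Matrix (Fin n → Fin 2) (Fin n → Fin 2) ℂ)
    (U : Fin n → Matrix (Fin 2) (Fin 2) ℂ)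
    (hU : ∀ i, U i ∈ Matrix.unitaryGroup (Fin 2) ℂ)
    (R : Finset (Fin n)) :
    ∑ s ∈ Finset.univ.filter (fun s : Fin n → Fin 4 => ∀ i, s i ≠ 0 ↔ i ∈ R),
        ‖(pauliString s * ρ).trace‖ ^ 2
      = ∑ s ∈ Finset.univ.filter (fun s : Fin n → Fin 4 => ∀ i, s i ≠ 0 ↔ i ∈ R),
          ‖(pauliString s * (tensorFold U * ρ * (tensorFold U)ᴴ)).trace‖ ^ 2 := by
  have hA : ∀ i, (if i ∈ R then {1, 2, 3} else {0} : Finset (Fin 4)) = {0}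
      ∨ (if i ∈ R then {1, 2, 3} else {0} : Finset (Fin 4)) = {1, 2, 3} := by
    intro i
    split_ifs <;> simp
  have hρ : (tensorFold U * ρ * (tensorFold U)ᴴ)ᴴ = tensorFold U * ρᴴ * (tensorFold U)ᴴ := by
    simp only [conjTranspose_mul, conjTranspose_conjTranspose, Matrix.mul_assoc]
  rw [filter_support_eq_piFinset]
  apply Complex.ofReal_injective
  push_cast
  simp only [sq_norm_trace_pauliString_mul, hρ]
  exact (sum_trace_pauliString_mul_unitary_conj hU hA ρ ρᴴ).symm
end

section
/- Let n ≥ 2, let |+⟩ = (|0⟩ + |1⟩)/√2, and let C^{n−1}Z = diag(1, 1, ..., 1, −1) be the 2^n × 2^n diagonal matrix with a single −1 in the last diagonal entry. Define |ψ⟩ = C^{n−1}Z |+⟩^{⊗n}. Then for all distinct k, l ∈ {1, ..., n}: ⟨ψ| X_k X_l |ψ⟩ = 1 − 2^{2−n} and ⟨ψ| X_k |ψ⟩ = 1 − 2^{2−n}, where X_k denotes the Kronecker product acting as the Pauli matrix X = [[0,1],[1,0]] on the k-th tensor factor and as the 2×2 identity elsewhere. -/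
open Matrix

/-- The Pauli string acting as X on the k-th qubit and as identity elsewhere. -/
noncomputable def XAt {n : ℕ} (k : Fin n) : Matrix (Fin n → Fin 2) (Fin n → Fin 2) ℂ :=
  pauliString (fun i => if i = k then 1 else 0)

/-- The single-qubit state |+⟩ = (|0⟩ + |1⟩)/√2, as a vector in ℂ². -/
noncomputable def plusVec : Fin 2 → ℂ :=
  fun j => (if j = 0 then 1 else 0) / ((Real.sqrt 2 : ℝ) : ℂ)
    + (if j = 1 then 1 else 0) / ((Real.sqrt 2 : ℝ) : ℂ)

/-- The multi-controlled-Z gate C^{n−1}Z: diagonal, equal to the identity except for the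
entry −1 at the all-ones bit string. -/
noncomputable def cnz (n : ℕ) : Matrix (Fin n → Fin 2) (Fin n → Fin 2) ℂ :=
  Matrix.diagonal (fun x : Fin n → Fin 2 => if x = (fun _ => 1) then (-1 : ℂ) else 1)

lemma pauli0 (a b : Fin 2) : pauli 0 a b = if a = b then 1 else 0 := by
  simp [pauli, Matrix.one_apply]

lemma pauli1 (a b : Fin 2) : pauli 1 a b = if a = b then 0 else 1 := by
  fin_cases a <;> fin_cases b <;> simp [pauli]

def flipAt {n : ℕ} (k : Fin n) (x : Fin n → Fin 2) : Fin n → Fin 2 :=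
  Function.update x k (1 - x k)

lemma XAt_apply {n : ℕ} (k : Fin n) (x y : Fin n → Fin 2) :
    XAt k x y = if y = flipAt k x then 1 else 0 := by
  unfold XAt pauliString flipAt
  rcases eq_or_ne y (Function.update x k (1 - x k)) with h | h
  · rw [if_pos h, h]
    apply Finset.prod_eq_one
    intro i _
    rcases eq_or_ne i k with hik | hik
    · subst hik
      have hne : ∀ a : Fin 2, a ≠ 1 - a := by decide
      simp [Function.update_self, pauli1, hne (x i)]
    · simp [hik, Function.update_of_ne hik, pauli0]
  · rw [if_neg h]
    obtain ⟨i, hi⟩ : ∃ i, y i ≠ Function.update x k (1 - x k) i := by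
      by_contra hc; push_neg at hc; exact h (funext hc)
    apply Finset.prod_eq_zero (Finset.mem_univ i)
    rcases eq_or_ne i k with hik | hik
    · subst hik
      rw [Function.update_self] at hi
      have hxy : y i = x i := by
        have : ∀ a b : Fin 2, b ≠ 1 - a → b = a := by decide
        exact this _ _ hi
      simp [pauli1, hxy]
    · rw [Function.update_of_ne hik] at hi
      simp [hik, pauli0, Ne.symm hi]

lemma XAt_mulVec {n : ℕ} (k : Fin n) (v : (Fin n → Fin 2) → ℂ) :
    XAt k *ᵥ v = fun x => v (flipAt k x) := by
  funext x
  simp [Matrix.mulVec, dotProduct, XAt_apply, ite_mul, Finset.sum_ite_eq]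

lemma flip_invol {n : ℕ} (k : Fin n) (x : Fin n → Fin 2) :
    flipAt k (flipAt k x) = x := by
  unfold flipAt
  rw [Function.update_self, Function.update_idem]
  have : ∀ a : Fin 2, 1 - (1 - a) = a := by decide
  rw [this, Function.update_eq_self]

lemma flip_comm {n : ℕ} {k l : Fin n} (hkl : k ≠ l) (x : Fin n → Fin 2) :
    flipAt k (flipAt l x) = flipAt l (flipAt k x) := by
  unfold flipAt
  rw [Function.update_of_ne hkl, Function.update_of_ne hkl.symm, Function.update_comm hkl.symm]

lemma flip_ne_ones {n : ℕ} (k : Fin n) (x : Fin n → Fin 2) (hx : x k = 1) :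
    flipAt k x ≠ (fun _ => 1) := by
  intro h
  have := congrFun h k
  rw [flipAt, Function.update_self, hx] at this
  exact absurd this (by decide)

lemma sum_eps {n : ℕ} (σ : (Fin n → Fin 2) → (Fin n → Fin 2))
    (hinv : ∀ x, σ (σ x) = x) (hne : σ (fun _ => 1) ≠ (fun _ => 1)) :
    (∑ x : Fin n → Fin 2, (if x = (fun _ => 1) then (-1:ℂ) else 1) *
      (if σ x = (fun _ => 1) then (-1:ℂ) else 1)) = 2 ^ n - 4 := by
  set o : Fin n → Fin 2 := fun _ => 1 with ho
  set c := σ o with hc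
  have hco : c ≠ o := hne
  have hσ : ∀ x, (σ x = o) ↔ (x = c) := by
    intro x
    constructor
    · intro h; rw [hc, ← h, hinv]
    · intro h; rw [h, hc, hinv]
  have hstep : ∀ x : Fin n → Fin 2,
      (if x = o then (-1:ℂ) else 1) * (if σ x = o then (-1:ℂ) else 1)
      = 1 - 2 * (if x = o then (1:ℂ) else 0) - 2 * (if x = c then (1:ℂ) else 0) := by
    intro x
    simp only [hσ x]
    by_cases h1 : x = o <;> by_cases h2 : x = c
    · exact absurd ((h1.symm.trans h2).symm) hco
    · simp [h1, h2, hco, hco.symm]; norm_num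
    · simp [h1, h2, hco, hco.symm]; norm_num
    · simp [h1, h2]
  rw [Finset.sum_congr rfl (fun x _ => hstep x)]
  rw [Finset.sum_sub_distrib, Finset.sum_sub_distrib, Finset.sum_const,
    ← Finset.mul_sum, ← Finset.mul_sum]
  simp [Finset.sum_ite_eq', Finset.card_univ]
  ring

lemma dot_val {n : ℕ} (ψ : (Fin n → Fin 2) → ℂ)
    (hψ : ∀ x, ψ x = (if x = (fun _ => 1) then (-1:ℂ) else 1) *
      ((((Real.sqrt 2)⁻¹ ^ n : ℝ)) : ℂ))
    (σ : (Fin n → Fin 2) → (Fin n → Fin 2)) (hinv : ∀ x, σ (σ x) = x)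
    (hne : σ (fun _ => 1) ≠ (fun _ => 1)) :
    star ψ ⬝ᵥ (fun x => ψ (σ x)) = (((1 : ℝ) - 2 ^ ((2 : ℤ) - (n : ℤ)) : ℝ) : ℂ) := by
  set R : ℝ := (Real.sqrt 2)⁻¹ ^ n with hR
  have key : star ψ ⬝ᵥ (fun x => ψ (σ x))
      = (R:ℂ)^2 * ∑ x : Fin n → Fin 2, (if x = (fun _ => 1) then (-1:ℂ) else 1) *
        (if σ x = (fun _ => 1) then (-1:ℂ) else 1) := by
    rw [Finset.mul_sum]
    simp only [dotProduct, Pi.star_apply, hψ]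
    apply Finset.sum_congr rfl
    intro x _
    by_cases h1 : x = (fun _ => 1) <;> by_cases h2 : σ x = (fun _ => 1) <;>
      simp [h1, h2, Complex.conj_ofReal] <;> ring
  rw [key, sum_eps σ hinv hne]
  have hcast : ((2:ℂ)^n - 4) = (((2:ℝ)^n - 4 : ℝ) : ℂ) := by push_cast; ring
  rw [hcast, ← Complex.ofReal_pow, ← Complex.ofReal_mul]
  rw [Complex.ofReal_inj]
  have h1 : R^2 = ((2:ℝ)^n)⁻¹ := by
    rw [hR, ← pow_mul, Nat.mul_comm, pow_mul, inv_pow, Real.sq_sqrt (by norm_num : (0:ℝ) ≤ 2),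
      ← inv_pow, inv_pow]
  have h2 : (2:ℝ) ^ ((2:ℤ) - (n:ℤ)) = 4 / 2^n := by
    rw [zpow_sub₀ (by norm_num : (2:ℝ) ≠ 0), zpow_natCast]
    norm_num
  rw [h1, h2]
  have hpos : (2:ℝ)^n ≠ 0 := by positivity
  field_simp

/-- For |ψ⟩ = C^{n−1}Z |+⟩^{⊗n} (n ≥ 2) and distinct qubits k, l:
⟨ψ|X_k X_l|ψ⟩ = 1 − 2^{2−n} and ⟨ψ|X_k|ψ⟩ = 1 − 2^{2−n}. -/
theorem cnz_state_correlations {n : ℕ} (hn : 2 ≤ n) (k l : Fin n) (hkl : k ≠ l)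
    (ψ : (Fin n → Fin 2) → ℂ)
    (hψ : ψ = cnz n *ᵥ (fun x => ∏ i, plusVec (x i))) :
    star ψ ⬝ᵥ ((XAt k * XAt l) *ᵥ ψ) = (((1 : ℝ) - 2 ^ ((2 : ℤ) - (n : ℤ)) : ℝ) : ℂ) ∧
    star ψ ⬝ᵥ (XAt k *ᵥ ψ) = (((1 : ℝ) - 2 ^ ((2 : ℤ) - (n : ℤ)) : ℝ) : ℂ) := by
  have hplus : ∀ j : Fin 2, plusVec j = ((((Real.sqrt 2)⁻¹ : ℝ)) : ℂ) := by
    intro j; fin_cases j <;> simp [plusVec, one_div]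
  have hψ' : ∀ x, ψ x = (if x = (fun _ => 1) then (-1:ℂ) else 1) *
      ((((Real.sqrt 2)⁻¹ ^ n : ℝ)) : ℂ) := by
    intro x
    rw [hψ]
    rw [cnz, Matrix.mulVec_diagonal]
    congr 1
    calc ∏ i, plusVec (x i) = ∏ _i : Fin n, ((((Real.sqrt 2)⁻¹ : ℝ)) : ℂ) :=
          Finset.prod_congr rfl (fun i _ => hplus (x i))
      _ = _ := by simp [Finset.prod_const, Complex.ofReal_pow]
  constructor
  · rw [← Matrix.mulVec_mulVec, XAt_mulVec, XAt_mulVec]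
    exact dot_val ψ hψ' (fun x => flipAt l (flipAt k x))
      (fun x => by
        show flipAt l (flipAt k (flipAt l (flipAt k x))) = x
        rw [flip_comm hkl, flip_invol, flip_invol])
      (flip_ne_ones l _ (by simp [flipAt, Function.update_of_ne hkl.symm]))
  · rw [XAt_mulVec]
    exact dot_val ψ hψ' (flipAt k) (flip_invol k) (flip_ne_ones k _ rfl)
end
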